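/- Let R = ℚ[α,β,x,y,z]/I be the graded quotient ring described in the context. Then P₀ R¹ = P₁ R¹ = ℚ·α, the one-dimensional subspace of R¹ spanned by α. (In particular, no class in H²(M_{4,1},ℚ) has perversity exactly 1.) -/

import Mathlib

open MvPolynomial Module

set_option synthInstance.maxHeartbeats 1000000
set_option maxHeartbeats 1000000

noncomputable section

abbrev P5 : Type := MvPolynomial (Fin 5) ℚ

def vA : P5 := X 0
def vB : P5 := X 1
def vX : P5 := X 2
def vY : P5 := X 3
def vZ : P5 := X 4

/-- weights: α, β have degree 1; x, y, z have degree 2 -/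
def wt5 : Fin 5 → ℕ := ![1, 1, 2, 2, 2]

/-- the Chung–Moon ideal of relations for `M_{4,1}` -/
def I41 : Ideal P5 := Ideal.span
  { vX * vZ - vY * vZ,
    vB ^ 2 * vZ - 3 * vY * vZ - 9 * vZ ^ 2,
    3 * vA ^ 2 * vZ - vA * vB * vZ + vY * vZ,
    vB ^ 2 * vY - 3 * vY ^ 2 - 9 * vY * vZ,
    vB ^ 2 * vX - vX * vY - 3 * vY ^ 2 - 3 * vA * vB * vZ - 9 * vY * vZ + 9 * vZ ^ 2,
    vB ^ 4 + 3 * vX ^ 2 - 9 * vX * vY - 3 * vY ^ 2 - 54 * vY * vZ - 81 * vZ ^ 2,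
    vB * vY * vZ + 9 * vA * vZ ^ 2 - 3 * vB * vZ ^ 2,
    2 * vB * vX * vY - 3 * vB * vY ^ 2 - 9 * vA * vY * vZ - 27 * vA * vZ ^ 2 + 9 * vB * vZ ^ 2,
    3 * vB * vX ^ 2 - 7 * vB * vY ^ 2 - 36 * vA * vY * vZ - 108 * vA * vZ ^ 2 + 36 * vB * vZ ^ 2,
    vA ^ 12 + 3 * vA ^ 11 * vB + 3 * vA ^ 10 * (vB ^ 2 + 2 * vX - vY)
      + vA ^ 9 * (-vB ^ 3 + 12 * vB * vX + 2 * vB * vY)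
      + 3 * vA ^ 8 * (9 * vX ^ 2 - 16 * vX * vY + 17 * vY ^ 2)
      + 28 * vA ^ 7 * vB * vY ^ 2 + 56 * vA ^ 6 * vY ^ 3
      + 201 * vA * vB * vZ ^ 5 - 19 * vY * vZ ^ 5 - 613 * vZ ^ 6,
    6 * vA ^ 10 * vX * vY - 12 * vA ^ 10 * vY ^ 2 - 10 * vA ^ 9 * vB * vY ^ 2
      - 45 * vA ^ 8 * vY ^ 3 - 104 * vA * vB * vZ ^ 6 + 2 * vY * vZ ^ 6 + 310 * vZ ^ 7 }

/-- `R = ℚ[α,β,x,y,z]/I`, isomorphic to `H^{2*}(M_{4,1}, ℚ)` -/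
abbrev R41 : Type := P5 ⧸ I41

def qm : P5 →ₐ[ℚ] R41 := Ideal.Quotient.mkₐ ℚ I41

/-- the degree-`e` graded piece `R^e` of `R` -/
def gr (e : ℕ) : Submodule ℚ R41 :=
  (weightedHomogeneousSubmodule ℚ wt5 e).map qm.toLinearMap

def gA : R41 := qm vA
def gB : R41 := qm vB
def gX : R41 := qm vX
def gY : R41 := qm vY
def gZ : R41 := qm vZ

/-- multiplication by `α^n` on `R` -/
def mulA (n : ℕ) : R41 →ₗ[ℚ] R41 := LinearMap.mulLeft ℚ (gA ^ n)

/-- `Ker(α^n)`, interpreted as `0` when `n ≤ 0` -/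
def kerA (n : ℤ) : Submodule ℚ R41 :=
  if n ≤ 0 then ⊥ else LinearMap.ker (mulA n.toNat)

/-- the perverse filtration
`P_k R^e = Σ_{i ≥ 1} (Ker(α^{14+k-2e+i}) ∩ Im(α^{i-1})) ∩ R^e` -/
def pervP (k : ℤ) (e : ℕ) : Submodule ℚ R41 :=
  (⨆ i : ℕ, kerA (14 + k - 2 * (e : ℤ) + ((i : ℤ) + 1)) ⊓ LinearMap.range (mulA i)) ⊓ gr e

/-- `c₂(0) = (25/32)α + (1/4)β` -/
def c20 : R41 := (25/32 : ℚ) • gA + (1/4 : ℚ) • gB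

/-- `c₁(2) = (3/16)α² + (1/4)αβ + x - y - z` -/
def c12 : R41 := (3/16 : ℚ) • gA ^ 2 + (1/4 : ℚ) • (gA * gB) + gX - gY - gZ

/-- `c₂(1) = (55/128)α² + (5/16)αβ + (3/8)β² - (3/4)x - (1/4)y - (17/4)z` -/
def c21 : R41 := (55/128 : ℚ) • gA ^ 2 + (5/16 : ℚ) • (gA * gB) + (3/8 : ℚ) • gB ^ 2
  - (3/4 : ℚ) • gX - (1/4 : ℚ) • gY - (17/4 : ℚ) • gZ

/-- `c₃(0) = (75/512)α² + (15/128)αβ - (1/16)β² + (9/32)x - (1/32)y - (1/32)z` -/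
def c30 : R41 := (75/512 : ℚ) • gA ^ 2 + (15/128 : ℚ) • (gA * gB) - (1/16 : ℚ) • gB ^ 2
  + (9/32 : ℚ) • gX - (1/32 : ℚ) • gY - (1/32 : ℚ) • gZ


/-! ### Auxiliary machinery for the proof -/

section Aux

open Finsupp

/-- lift of the quotient: elements of `I41` map to `0` -/
lemma qm_eq_zero {p : P5} (hp : p ∈ I41) : qm p = 0 := by
  simpa [qm, Ideal.Quotient.mkₐ_eq_mk] using (Ideal.Quotient.eq_zero_iff_mem).mpr hp

lemma mem_gens0 : vX * vZ - vY * vZ ∈ I41 := Ideal.subset_span (by simp [Set.mem_insert_iff])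
lemma mem_gens1 : vB ^ 2 * vZ - 3 * vY * vZ - 9 * vZ ^ 2 ∈ I41 := Ideal.subset_span (by simp [Set.mem_insert_iff])
lemma mem_gens2 : 3 * vA ^ 2 * vZ - vA * vB * vZ + vY * vZ ∈ I41 := Ideal.subset_span (by simp [Set.mem_insert_iff])
lemma mem_gens3 : vB ^ 2 * vY - 3 * vY ^ 2 - 9 * vY * vZ ∈ I41 := Ideal.subset_span (by simp [Set.mem_insert_iff])
lemma mem_gens4 : vB ^ 2 * vX - vX * vY - 3 * vY ^ 2 - 3 * vA * vB * vZ - 9 * vY * vZ + 9 * vZ ^ 2 ∈ I41 := Ideal.subset_span (by simp [Set.mem_insert_iff])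
lemma mem_gens5 : vB ^ 4 + 3 * vX ^ 2 - 9 * vX * vY - 3 * vY ^ 2 - 54 * vY * vZ - 81 * vZ ^ 2 ∈ I41 := Ideal.subset_span (by simp [Set.mem_insert_iff])
lemma mem_gens6 : vB * vY * vZ + 9 * vA * vZ ^ 2 - 3 * vB * vZ ^ 2 ∈ I41 := Ideal.subset_span (by simp [Set.mem_insert_iff])
lemma mem_gens7 : 2 * vB * vX * vY - 3 * vB * vY ^ 2 - 9 * vA * vY * vZ - 27 * vA * vZ ^ 2 + 9 * vB * vZ ^ 2 ∈ I41 := Ideal.subset_span (by simp [Set.mem_insert_iff])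
lemma mem_gens8 : 3 * vB * vX ^ 2 - 7 * vB * vY ^ 2 - 36 * vA * vY * vZ - 108 * vA * vZ ^ 2 + 36 * vB * vZ ^ 2 ∈ I41 := Ideal.subset_span (by simp [Set.mem_insert_iff])
lemma mem_gens9 : vA ^ 12 + 3 * vA ^ 11 * vB + 3 * vA ^ 10 * (vB ^ 2 + 2 * vX - vY)
      + vA ^ 9 * (-vB ^ 3 + 12 * vB * vX + 2 * vB * vY)
      + 3 * vA ^ 8 * (9 * vX ^ 2 - 16 * vX * vY + 17 * vY ^ 2)
      + 28 * vA ^ 7 * vB * vY ^ 2 + 56 * vA ^ 6 * vY ^ 3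
      + 201 * vA * vB * vZ ^ 5 - 19 * vY * vZ ^ 5 - 613 * vZ ^ 6 ∈ I41 := Ideal.subset_span (by simp [Set.mem_insert_iff])
lemma mem_gens10 : 6 * vA ^ 10 * vX * vY - 12 * vA ^ 10 * vY ^ 2 - 10 * vA ^ 9 * vB * vY ^ 2
      - 45 * vA ^ 8 * vY ^ 3 - 104 * vA * vB * vZ ^ 6 + 2 * vY * vZ ^ 6 + 310 * vZ ^ 7 ∈ I41 := Ideal.subset_span (by simp [Set.mem_insert_iff])

lemma hrel0 : gX * gZ - gY * gZ = 0 := by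
  have h := qm_eq_zero mem_gens0
  simpa only [gX, gY, gZ, map_sub, map_mul] using h
lemma hrel1 : gB ^ 2 * gZ - 3 * gY * gZ - 9 * gZ ^ 2 = 0 := by
  have h := qm_eq_zero mem_gens1
  simpa only [gB, gY, gZ, map_sub, map_mul, map_pow, map_ofNat] using h
lemma hrel2 : 3 * gA ^ 2 * gZ - gA * gB * gZ + gY * gZ = 0 := by
  have h := qm_eq_zero mem_gens2
  simpa only [gA, gB, gY, gZ, map_add, map_sub, map_mul, map_pow, map_ofNat] using h
lemma hrel3 : gB ^ 2 * gY - 3 * gY ^ 2 - 9 * gY * gZ = 0 := by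
  have h := qm_eq_zero mem_gens3
  simpa only [gB, gY, gZ, map_sub, map_mul, map_pow, map_ofNat] using h
lemma hrel4 : gB ^ 2 * gX - gX * gY - 3 * gY ^ 2 - 3 * gA * gB * gZ - 9 * gY * gZ + 9 * gZ ^ 2 = 0 := by
  have h := qm_eq_zero mem_gens4
  simpa only [gA, gB, gX, gY, gZ, map_add, map_sub, map_mul, map_pow, map_ofNat] using h
lemma hrel5 : gB ^ 4 + 3 * gX ^ 2 - 9 * gX * gY - 3 * gY ^ 2 - 54 * gY * gZ - 81 * gZ ^ 2 = 0 := by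
  have h := qm_eq_zero mem_gens5
  simpa only [gB, gX, gY, gZ, map_add, map_sub, map_mul, map_pow, map_ofNat] using h
lemma hrel6 : gB * gY * gZ + 9 * gA * gZ ^ 2 - 3 * gB * gZ ^ 2 = 0 := by
  have h := qm_eq_zero mem_gens6
  simpa only [gA, gB, gY, gZ, map_add, map_sub, map_mul, map_pow, map_ofNat] using h
lemma hrel7 : 2 * gB * gX * gY - 3 * gB * gY ^ 2 - 9 * gA * gY * gZ - 27 * gA * gZ ^ 2 + 9 * gB * gZ ^ 2 = 0 := by
  have h := qm_eq_zero mem_gens7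
  simpa only [gA, gB, gX, gY, gZ, map_add, map_sub, map_mul, map_pow, map_ofNat] using h
lemma hrel8 : 3 * gB * gX ^ 2 - 7 * gB * gY ^ 2 - 36 * gA * gY * gZ - 108 * gA * gZ ^ 2 + 36 * gB * gZ ^ 2 = 0 := by
  have h := qm_eq_zero mem_gens8
  simpa only [gA, gB, gX, gY, gZ, map_add, map_sub, map_mul, map_pow, map_ofNat] using h
lemma hrel9 : gA ^ 12 + 3 * gA ^ 11 * gB + 3 * gA ^ 10 * (gB ^ 2 + 2 * gX - gY)
      + gA ^ 9 * (-gB ^ 3 + 12 * gB * gX + 2 * gB * gY)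
      + 3 * gA ^ 8 * (9 * gX ^ 2 - 16 * gX * gY + 17 * gY ^ 2)
      + 28 * gA ^ 7 * gB * gY ^ 2 + 56 * gA ^ 6 * gY ^ 3
      + 201 * gA * gB * gZ ^ 5 - 19 * gY * gZ ^ 5 - 613 * gZ ^ 6 = 0 := by
  have h := qm_eq_zero mem_gens9
  simpa only [gA, gB, gX, gY, gZ, map_add, map_sub, map_neg, map_mul, map_pow, map_ofNat] using h
lemma hrel10 : 6 * gA ^ 10 * gX * gY - 12 * gA ^ 10 * gY ^ 2 - 10 * gA ^ 9 * gB * gY ^ 2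
      - 45 * gA ^ 8 * gY ^ 3 - 104 * gA * gB * gZ ^ 6 + 2 * gY * gZ ^ 6 + 310 * gZ ^ 7 = 0 := by
  have h := qm_eq_zero mem_gens10
  simpa only [gA, gB, gX, gY, gZ, map_add, map_sub, map_mul, map_pow, map_ofNat] using h

lemma cancel162 {x : R41} (h : (162 : R41) * x = 0) : x = 0 := by
  have hu : (algebraMap ℚ R41 (1/162)) * (162 : R41) = 1 := by
    rw [show ((162 : R41)) = algebraMap ℚ R41 162 from (map_ofNat _ 162).symm, ← map_mul]
    norm_num
  calc x = (algebraMap ℚ R41 (1/162) * (162 : R41)) * x := by rw [hu, one_mul]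
    _ = algebraMap ℚ R41 (1/162) * ((162 : R41) * x) := by rw [mul_assoc]
    _ = 0 := by rw [h, mul_zero]

set_option maxHeartbeats 8000000 in
/-- `α¹⁵ = 0` in `R` -/
lemma hgA15 : gA ^ 15 = 0 := by
  apply cancel162
  have hrel0 := hrel0
  have hrel1 := hrel1
  have hrel2 := hrel2
  have hrel3 := hrel3
  have hrel4 := hrel4
  have hrel5 := hrel5
  have hrel6 := hrel6
  have hrel7 := hrel7
  have hrel8 := hrel8
  have hrel9 := hrel9
  have hrel10 := hrel10
  linear_combination (norm := ring1) ((2383344:R41)*gB*gZ^5 + (73872:R41)*gB*gY*gZ^4 + (-595836:R41)*gA*gZ^5 + (-18468:R41)*gA*gY*gZ^4 + (-781488:R41)*gA*gB^2*gZ^4 + (195372:R41)*gA^2*gB*gZ^4 + (-3919104:R41)*gA^6*gB*gY*gZ + (11757312:R41)*gA^7*gY*gZ + (4164048:R41)*gA^7*gY^2 + (-1312200:R41)*gA^8*gB*gZ + (-244944:R41)*gA^8*gB*gY + (4321512:R41)*gA^9*gZ + (1743039:R41)*gA^9*gY + (26244:R41)*gA^9*gB^2 + (-207036:R41)*gA^10*gB)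 * hrel0
      + ((-794448:R41)*gB*gZ^5 + (-24624:R41)*gB*gY*gZ^4 + (2380554:R41)*gA*gZ^5 + (-870624:R41)*gA*gY*gZ^4 + (-1698624:R41)*gA*gY^2*gZ^3 + (553140:R41)*gA*gY^3*gZ^2 + (89262:R41)*gA*gY^4*gZ + (-26636:R41)*gA*gY^5 + (260496:R41)*gA*gB^2*gZ^4 + (-195372:R41)*gA^2*gB*gZ^4 + (117450:R41)*gA^3*gZ^4 + (99630:R41)*gA^3*gY*gZ^3 + (325836:R41)*gA^3*gY^2*gZ^2 + (213300:R41)*gA^3*gY^3*gZ + (-14952:R41)*gA^3*gY^4 + (30618:R41)*gA^5*gZ^3 + (109836:R41)*gA^5*gY*gZ^2 + (365850:R41)*gA^5*gY^2*gZ + (239724:R41)*gA^5*gY^3 + (30618:R41)*gA^7*gZ^2 + (120042:R41)*gA^7*gY*gZ + (612900:R41)*gA^7*gY^2 + (109350:R41)*gA^9*gZ + (272808:R41)*gA^9*gY + (32076:R41)*gA^10*gB + (-58320:R41)*gA^11) * hrel1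
      + ((-570978:R41)*gB*gZ^5 + (-1540332:R41)*gB*gY*gZ^4 + (-1698624:R41)*gB*gY^2*gZ^3 + (553140:R41)*gB*gY^3*gZ^2 + (89262:R41)*gB*gY^4*gZ + (-26636:R41)*gB*gY^5 + (-13085496:R41)*gA*gZ^5 + (-17503884:R41)*gA*gY*gZ^4 + (5113206:R41)*gA*gY^2*gZ^3 + (2546964:R41)*gA*gY^3*gZ^2 + (-211662:R41)*gA*gY^4*gZ + (-79908:R41)*gA*gY^5 + (19764:R41)*gA^2*gB*gZ^4 + (99630:R41)*gA^2*gB*gY*gZ^3 + (325836:R41)*gA^2*gB*gY^2*gZ^2 + (213300:R41)*gA^2*gB*gY^3*gZ + (-14952:R41)*gA^2*gB*gY^4 + (91854:R41)*gA^3*gZ^4 + (329508:R41)*gA^3*gY*gZ^3 + (1087344:R41)*gA^3*gY^2*gZ^2 + (1005750:R41)*gA^3*gY^3*gZ + (194868:R41)*gA^3*gY^4 + (30618:R41)*gA^4*gB*gZ^3 + (109836:R41)*gA^4*gB*gY*gZ^2 + (365850:R41)*gA^4*gB*gY^2*gZ + (239724:R41)*gA^4*gB*gY^3 + (91854:R41)*gA^5*gZ^3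 + (360126:R41)*gA^5*gY*gZ^2 + (237816:R41)*gA^5*gY^2*gZ + (134568:R41)*gA^5*gY^3 + (30618:R41)*gA^6*gB*gZ^2 + (120042:R41)*gA^6*gB*gY*gZ + (286308:R41)*gA^6*gB*gY^2 + (91854:R41)*gA^7*gZ^2 + (3448170:R41)*gA^7*gY*gZ + (128628:R41)*gA^7*gY^2 + (310554:R41)*gA^8*gB*gZ + (75978:R41)*gA^8*gB*gY + (637875:R41)*gA^9*gZ + (-46170:R41)*gA^9*gY + (-8748:R41)*gA^10*gB) * hrel2
      + ((72576:R41)*gA^6*gB*gY^2 + (145152:R41)*gA^7*gY^2 + (27216:R41)*gA^7*gX*gY + (36288:R41)*gA^7*gB^2*gY + (38880:R41)*gA^8*gB*gY + (-62208:R41)*gA^8*gB*gX + (47898:R41)*gA^9*gY + (90639:R41)*gA^9*gX + (16038:R41)*gA^9*gB^2 + (4374:R41)*gA^10*gB + (12150:R41)*gA^11) * hrel3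
      + ((-136080:R41)*gA^7*gY^2 + (34992:R41)*gA^8*gB*gX + (78732:R41)*gA^9*gZ + (-13851:R41)*gA^9*gY + (-69012:R41)*gA^9*gX + (10692:R41)*gA^9*gB^2 + (-16524:R41)*gA^10*gB + (-8748:R41)*gA^11) * hrel4
      + ((-16686:R41)*gA^9*gY + (8748:R41)*gA^9*gX + (-1296:R41)*gA^9*gB^2 + (4860:R41)*gA^10*gB + (486:R41)*gA^11) * hrel5
      + ((2394504:R41)*gZ^5 + (1343826:R41)*gY*gZ^4 + (-44982:R41)*gY^2*gZ^3 + (-581202:R41)*gY^3*gZ^2 + (-9354:R41)*gY^4*gZ + (26636:R41)*gY^5 + (4490316:R41)*gA^2*gZ^4 + (5963544:R41)*gA^2*gY*gZ^3 + (-1381968:R41)*gA^2*gY^2*gZ^2 + (-647892:R41)*gA^2*gY^3*gZ + (14952:R41)*gA^2*gY^4 + (-217728:R41)*gA^6*gY^2 + (-1109538:R41)*gA^8*gY + (-264627:R41)*gA^10) * hrel6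
      + ((544320:R41)*gA^6*gY^2 + (435456:R41)*gA^6*gX*gY + (49572:R41)*gA^8*gY + (250776:R41)*gA^8*gX + (15228:R41)*gA^10) * hrel7
      + ((-290304:R41)*gA^6*gY^2 + (-64152:R41)*gA^8*gY + (-34992:R41)*gA^8*gX + (-4374:R41)*gA^10) * hrel8
      + ((-3240:R41)*gB*gY + (3888:R41)*gB*gX + (-1296:R41)*gB^3 + (486:R41)*gA*gY + (-972:R41)*gA*gX + (972:R41)*gA*gB^2 + (-486:R41)*gA^2*gB + (162:R41)*gA^3) * hrel9
      + ((108:R41)*gB + (-405:R41)*gA) * hrel10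

/-! ### the two-variable certificate: `α^14 β ∉ I41` -/

abbrev P2 : Type := MvPolynomial (Fin 2) ℚ
noncomputable def S2 : P2 := X 0
noncomputable def T2 : P2 := X 1
noncomputable def TT : P2 := T2 ^ 14 + 420 * S2 ^ 2 * T2 ^ 12
noncomputable def J2 : Ideal P2 := Ideal.span {S2 ^ 3, TT}
noncomputable def arc : Fin 5 → P2 :=
  ![T2 - 2 * S2, 3 * T2 + 15 * S2, 21 * S2 * T2 - 42 * S2 ^ 2, 21 * S2 * T2 - 42 * S2 ^ 2,
    T2 ^ 2 + 3 * S2 * T2 + 39 * S2 ^ 2]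

lemma mem_J2 (q r : P2) : S2 ^ 3 * q + TT * r ∈ J2 := by
  refine add_mem (Ideal.mul_mem_right _ _ ?_) (Ideal.mul_mem_right _ _ ?_) <;>
    exact Ideal.subset_span (by simp [Set.mem_insert_iff])

lemma I41_le_comap : I41 ≤ Ideal.comap (MvPolynomial.aeval arc : P5 →ₐ[ℚ] P2) J2 := by
  rw [I41, Ideal.span_le]
  rintro f hf
  simp only [Set.mem_insert_iff, Set.mem_singleton_iff] at hf
  rw [SetLike.mem_coe, Ideal.mem_comap]
  rcases hf with rfl|rfl|rfl|rfl|rfl|rfl|rfl|rfl|rfl|rfl|rfl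
  · have h : (MvPolynomial.aeval arc) (vX * vZ - vY * vZ) = S2 ^ 3 * 0 + TT * 0 := by
      simp only [vX, vY, vZ, map_sub, map_mul, MvPolynomial.aeval_X, arc]
      simp only [Matrix.cons_val_zero, Matrix.cons_val_one, Matrix.head_cons,
        Matrix.cons_val_two, Matrix.tail_cons, Matrix.cons_val_three, Matrix.cons_val_four]
      ring
    rw [h]; exact mem_J2 _ _
  · have h : (MvPolynomial.aeval arc) (vB ^ 2 * vZ - 3 * vY * vZ - 9 * vZ ^ 2) = S2 ^ 3 * (0 : P2) + TT * (0 : P2) := by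
      simp only [vA, vB, vX, vY, vZ, map_add, map_sub, map_neg, map_mul, map_pow, map_ofNat, MvPolynomial.aeval_X, arc]
      simp only [Matrix.cons_val_zero, Matrix.cons_val_one, Matrix.head_cons,
        Matrix.cons_val_two, Matrix.tail_cons, Matrix.cons_val_three, Matrix.cons_val_four]
      rw [TT]; ring
    rw [h]; exact mem_J2 _ _
  · have h : (MvPolynomial.aeval arc) (3 * vA ^ 2 * vZ - vA * vB * vZ + vY * vZ) = S2 ^ 3 * (0 : P2) + TT * (0 : P2) := by
      simp only [vA, vB, vX, vY, vZ, map_add, map_sub, map_neg, map_mul, map_pow, map_ofNat, MvPolynomial.aeval_X, arc]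
      simp only [Matrix.cons_val_zero, Matrix.cons_val_one, Matrix.head_cons,
        Matrix.cons_val_two, Matrix.tail_cons, Matrix.cons_val_three, Matrix.cons_val_four]
      rw [TT]; ring
    rw [h]; exact mem_J2 _ _
  · have h : (MvPolynomial.aeval arc) (vB ^ 2 * vY - 3 * vY ^ 2 - 9 * vY * vZ) = S2 ^ 3 * (0 : P2) + TT * (0 : P2) := by
      simp only [vA, vB, vX, vY, vZ, map_add, map_sub, map_neg, map_mul, map_pow, map_ofNat, MvPolynomial.aeval_X, arc]
      simp only [Matrix.cons_val_zero, Matrix.cons_val_one, Matrix.head_cons,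
        Matrix.cons_val_two, Matrix.tail_cons, Matrix.cons_val_three, Matrix.cons_val_four]
      rw [TT]; ring
    rw [h]; exact mem_J2 _ _
  · have h : (MvPolynomial.aeval arc) (vB ^ 2 * vX - vX * vY - 3 * vY ^ 2 - 3 * vA * vB * vZ - 9 * vY * vZ + 9 * vZ ^ 2) = S2 ^ 3 * ((3087 : P2)*T2 + (15435 : P2)*S2) + TT * (0 : P2) := by
      simp only [vA, vB, vX, vY, vZ, map_add, map_sub, map_neg, map_mul, map_pow, map_ofNat, MvPolynomial.aeval_X, arc]
      simp only [Matrix.cons_val_zero, Matrix.cons_val_one, Matrix.head_cons,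
        Matrix.cons_val_two, Matrix.tail_cons, Matrix.cons_val_three, Matrix.cons_val_four]
      rw [TT]; ring
    rw [h]; exact mem_J2 _ _
  · have h : (MvPolynomial.aeval arc) (vB ^ 4 + 3 * vX ^ 2 - 9 * vX * vY - 3 * vY ^ 2 - 54 * vY * vZ - 81 * vZ ^ 2) = S2 ^ 3 * (0 : P2) + TT * (0 : P2) := by
      simp only [vA, vB, vX, vY, vZ, map_add, map_sub, map_neg, map_mul, map_pow, map_ofNat, MvPolynomial.aeval_X, arc]
      simp only [Matrix.cons_val_zero, Matrix.cons_val_one, Matrix.head_cons,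
        Matrix.cons_val_two, Matrix.tail_cons, Matrix.cons_val_three, Matrix.cons_val_four]
      rw [TT]; ring
    rw [h]; exact mem_J2 _ _
  · have h : (MvPolynomial.aeval arc) (vB * vY * vZ + 9 * vA * vZ ^ 2 - 3 * vB * vZ ^ 2) = S2 ^ 3 * ((-3087 : P2)*T2^2 + (-9261 : P2)*S2*T2 + (-120393 : P2)*S2^2) + TT * (0 : P2) := by
      simp only [vA, vB, vX, vY, vZ, map_add, map_sub, map_neg, map_mul, map_pow, map_ofNat, MvPolynomial.aeval_X, arc]
      simp only [Matrix.cons_val_zero, Matrix.cons_val_one, Matrix.head_cons,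
        Matrix.cons_val_two, Matrix.tail_cons, Matrix.cons_val_three, Matrix.cons_val_four]
      rw [TT]; ring
    rw [h]; exact mem_J2 _ _
  · have h : (MvPolynomial.aeval arc) (2 * vB * vX * vY - 3 * vB * vY ^ 2 - 9 * vA * vY * vZ - 27 * vA * vZ ^ 2 + 9 * vB * vZ ^ 2) = S2 ^ 3 * ((9261 : P2)*T2^2 + (92610 : P2)*S2*T2 + (231525 : P2)*S2^2) + TT * (0 : P2) := by
      simp only [vA, vB, vX, vY, vZ, map_add, map_sub, map_neg, map_mul, map_pow, map_ofNat, MvPolynomial.aeval_X, arc]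
      simp only [Matrix.cons_val_zero, Matrix.cons_val_one, Matrix.head_cons,
        Matrix.cons_val_two, Matrix.tail_cons, Matrix.cons_val_three, Matrix.cons_val_four]
      rw [TT]; ring
    rw [h]; exact mem_J2 _ _
  · have h : (MvPolynomial.aeval arc) (3 * vB * vX ^ 2 - 7 * vB * vY ^ 2 - 36 * vA * vY * vZ - 108 * vA * vZ ^ 2 + 36 * vB * vZ ^ 2) = S2 ^ 3 * ((37044 : P2)*T2^2 + (370440 : P2)*S2*T2 + (926100 : P2)*S2^2) + TT * (0 : P2) := by
      simp only [vA, vB, vX, vY, vZ, map_add, map_sub, map_neg, map_mul, map_pow, map_ofNat, MvPolynomial.aeval_X, arc]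
      simp only [Matrix.cons_val_zero, Matrix.cons_val_one, Matrix.head_cons,
        Matrix.cons_val_two, Matrix.tail_cons, Matrix.cons_val_three, Matrix.cons_val_four]
      rw [TT]; ring
    rw [h]; exact mem_J2 _ _
  · have h : (MvPolynomial.aeval arc) (vA ^ 12 + 3 * vA ^ 11 * vB + 3 * vA ^ 10 * (vB ^ 2 + 2 * vX - vY)
      + vA ^ 9 * (-vB ^ 3 + 12 * vB * vX + 2 * vB * vY)
      + 3 * vA ^ 8 * (9 * vX ^ 2 - 16 * vX * vY + 17 * vY ^ 2)
      + 28 * vA ^ 7 * vB * vY ^ 2 + 56 * vA ^ 6 * vY ^ 3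
      + 201 * vA * vB * vZ ^ 5 - 19 * vY * vZ ^ 5 - 613 * vZ ^ 6) = S2 ^ 3 * ((-730247 : P2)*T2^9 + (-14839209 : P2)*S2*T2^8 + (-25742493 : P2)*S2^2*T2^7 + (-1187184054 : P2)*S2^3*T2^6 + (-3947748210 : P2)*S2^4*T2^5 + (-33993312381 : P2)*S2^5*T2^4 + (-119936545547 : P2)*S2^6*T2^3 + (-511355279274 : P2)*S2^7*T2^2 + (-1048372028088 : P2)*S2^8*T2 + (-2629383033221 : P2)*S2^9) + TT * (0 : P2) := by
      simp only [vA, vB, vX, vY, vZ, map_add, map_sub, map_neg, map_mul, map_pow, map_ofNat, MvPolynomial.aeval_X, arc]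
      simp only [Matrix.cons_val_zero, Matrix.cons_val_one, Matrix.head_cons,
        Matrix.cons_val_two, Matrix.tail_cons, Matrix.cons_val_three, Matrix.cons_val_four]
      rw [TT]; ring
    rw [h]; exact mem_J2 _ _
  · have h : (MvPolynomial.aeval arc) (6 * vA ^ 10 * vX * vY - 12 * vA ^ 10 * vY ^ 2 - 10 * vA ^ 9 * vB * vY ^ 2
      - 45 * vA ^ 8 * vY ^ 3 - 104 * vA * vB * vZ ^ 6 + 2 * vY * vZ ^ 6 + 310 * vZ ^ 7) = S2 ^ 3 * ((149121 : P2)*T2^11 + (12651660 : P2)*S2*T2^10 + (-21909636 : P2)*S2^2*T2^9 + (1235797290 : P2)*S2^3*T2^8 + (2895981012 : P2)*S2^4*T2^7 + (44954521290 : P2)*S2^5*T2^6 + (188174816928 : P2)*S2^6*T2^5 + (1063814407362 : P2)*S2^7*T2^4 + (3641656532220 : P2)*S2^8*T2^3 + (12977155327500 : P2)*S2^9*T2^2 + (24686489782584 : P2)*S2^10*T2 + (53225496259830 : P2)*S2^11) + TT * ((-2 : P2)) := by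
      simp only [vA, vB, vX, vY, vZ, map_add, map_sub, map_neg, map_mul, map_pow, map_ofNat, MvPolynomial.aeval_X, arc]
      simp only [Matrix.cons_val_zero, Matrix.cons_val_one, Matrix.head_cons,
        Matrix.cons_val_two, Matrix.tail_cons, Matrix.cons_val_three, Matrix.cons_val_four]
      rw [TT]; ring
    rw [h]; exact mem_J2 _ _
  
lemma target_id :
    (MvPolynomial.aeval arc) (vA ^ 14 * vB) =
      (-588 : P2) * S2 ^ 2 * T2 ^ 13 + S2 ^ 3 * ((25704 : P2)*T2^12 + (4368 : P2)*S2*T2^11 + (48048 : P2)*S2^2*T2^10 + (-384384 : P2)*S2^3*T2^9 + (1564992 : P2)*S2^4*T2^8 + (-4283136 : P2)*S2^5*T2^7 + (8456448 : P2)*S2^6*T2^6 + (-12300288 : P2)*S2^7*T2^5 + (13138944 : P2)*S2^8*T2^4 + (-10063872 : P2)*S2^9*T2^3 + (5246976 : P2)*S2^10*T2^2 + (-1671168 : P2)*S2^11*T2 + (245760 : P2)*S2^12) + TT * ((3 : P2)*T2 + (-69 : P2)*S2) := by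
  simp only [vA, vB, map_mul, map_pow, MvPolynomial.aeval_X, arc]
  simp only [Matrix.cons_val_zero, Matrix.cons_val_one, Matrix.head_cons]
  rw [TT]; ring

/-- the coefficient functional certifying non-membership -/
noncomputable def E1 : Fin 2 →₀ ℕ := Finsupp.single 0 2 + Finsupp.single 1 13
noncomputable def E2 : Fin 2 →₀ ℕ := Finsupp.single 1 15
noncomputable def lam : P2 → ℚ := fun p => MvPolynomial.coeff E1 p - 420 * MvPolynomial.coeff E2 p

lemma lam_add (p q : P2) : lam (p + q) = lam p + lam q := by
  simp only [lam, MvPolynomial.coeff_add]; ring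

lemma lam_s3 (q : P2) : lam (q * S2 ^ 3) = 0 := by
  have hm : (S2 : P2) ^ 3 = MvPolynomial.monomial (Finsupp.single 0 3) (1 : ℚ) := by
    rw [S2, MvPolynomial.X_pow_eq_monomial]
  have h1 : ¬ Finsupp.single (0 : Fin 2) 3 ≤ E1 := by
    rw [Finsupp.le_def]; push_neg
    exact ⟨0, by simp [E1]⟩
  have h2 : ¬ Finsupp.single (0 : Fin 2) 3 ≤ E2 := by
    rw [Finsupp.le_def]; push_neg
    exact ⟨0, by simp [E2]⟩
  simp [lam, hm, MvPolynomial.coeff_mul_monomial', h1, h2]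

lemma lam_TT (q : P2) : lam (q * TT) = 0 := by
  have e14 : (T2 : P2) ^ 14 = MvPolynomial.monomial (Finsupp.single 1 14) (1 : ℚ) := by
    rw [T2, MvPolynomial.X_pow_eq_monomial]
  have e212 : (S2 : P2) ^ 2 * T2 ^ 12 =
      MvPolynomial.monomial (Finsupp.single 0 2 + Finsupp.single 1 12) (1 : ℚ) := by
    rw [S2, T2, MvPolynomial.X_pow_eq_monomial, MvPolynomial.X_pow_eq_monomial,
      MvPolynomial.monomial_mul, one_mul]
  have hq : q * TT = q * T2 ^ 14 + (420 : ℚ) • (q * (S2 ^ 2 * T2 ^ 12)) := by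
    rw [TT, MvPolynomial.smul_eq_C_mul,
      show (MvPolynomial.C (420 : ℚ) : P2) = (420 : P2) from map_ofNat _ 420]
    ring
  have h1 : ¬ Finsupp.single (1 : Fin 2) 14 ≤ E1 := by
    rw [Finsupp.le_def]; push_neg
    exact ⟨1, by simp [E1]⟩
  have h2 : Finsupp.single (1 : Fin 2) 14 ≤ E2 := by
    rw [Finsupp.le_def]; intro i
    fin_cases i <;> simp [E2]
  have h3 : Finsupp.single (0 : Fin 2) 2 + Finsupp.single 1 12 ≤ E1 := by
    rw [Finsupp.le_def]; intro i
    fin_cases i <;> simp [E1]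
  have h4 : ¬ (Finsupp.single (0 : Fin 2) 2 + Finsupp.single 1 12 ≤ E2) := by
    rw [Finsupp.le_def]; push_neg
    exact ⟨0, by simp [E2]⟩
  have k1 : E2 - Finsupp.single (1 : Fin 2) 14 = Finsupp.single 1 1 := by
    ext i; fin_cases i <;> simp [E2]
  have k2 : E1 - (Finsupp.single (0 : Fin 2) 2 + Finsupp.single 1 12) = Finsupp.single 1 1 := by
    ext i; fin_cases i <;> simp [E1]
  rw [hq, lam_add]
  simp only [lam, e14, e212, MvPolynomial.coeff_smul, MvPolynomial.coeff_mul_monomial',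
    h1, h2, h3, h4, if_true, if_false, k1, k2, smul_eq_mul]
  ring

lemma lam_J2 {p : P2} (hp : p ∈ J2) : lam p = 0 := by
  have key : ∀ q : P2, lam (q * p) = 0 := by
    rw [J2] at hp
    refine Submodule.span_induction ?_ ?_ ?_ ?_ hp
    · rintro x hx
      simp only [Set.mem_insert_iff, Set.mem_singleton_iff] at hx
      rcases hx with rfl | rfl
      · exact lam_s3
      · exact lam_TT
    · intro q; simp only [mul_zero]
      simp [lam]
    · intro x y _ _ hx hy q
      rw [mul_add, lam_add, hx, hy, add_zero]
    · intro a x _ hx q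
      rw [smul_eq_mul, show q * (a * x) = (q * a) * x by ring, hx]
  simpa using key 1

lemma lam_target : lam ((-588 : P2) * S2 ^ 2 * T2 ^ 13 + S2 ^ 3 * ((25704 : P2)*T2^12 + (4368 : P2)*S2*T2^11 + (48048 : P2)*S2^2*T2^10 + (-384384 : P2)*S2^3*T2^9 + (1564992 : P2)*S2^4*T2^8 + (-4283136 : P2)*S2^5*T2^7 + (8456448 : P2)*S2^6*T2^6 + (-12300288 : P2)*S2^7*T2^5 + (13138944 : P2)*S2^8*T2^4 + (-10063872 : P2)*S2^9*T2^3 + (5246976 : P2)*S2^10*T2^2 + (-1671168 : P2)*S2^11*T2 + (245760 : P2)*S2^12) + TT * ((3 : P2)*T2 + (-69 : P2)*S2)) = -588 := by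
  have em : (-588 : P2) * S2 ^ 2 * T2 ^ 13 = MvPolynomial.monomial E1 (-588 : ℚ) := by
    rw [S2, T2, MvPolynomial.X_pow_eq_monomial, MvPolynomial.X_pow_eq_monomial]
    rw [show ((-588 : P2)) = MvPolynomial.C (-588 : ℚ) from by rw [map_neg, map_ofNat]]
    rw [mul_assoc, MvPolynomial.monomial_mul, MvPolynomial.C_mul_monomial, one_mul, mul_one, E1]
  rw [lam_add, lam_add]
  rw [show S2 ^ 3 * ((25704 : P2)*T2^12 + (4368 : P2)*S2*T2^11 + (48048 : P2)*S2^2*T2^10 + (-384384 : P2)*S2^3*T2^9 + (1564992 : P2)*S2^4*T2^8 + (-4283136 : P2)*S2^5*T2^7 + (8456448 : P2)*S2^6*T2^6 + (-12300288 : P2)*S2^7*T2^5 + (13138944 : P2)*S2^8*T2^4 + (-10063872 : P2)*S2^9*T2^3 + (5246976 : P2)*S2^10*T2^2 + (-1671168 : P2)*S2^11*T2 + (245760 : P2)*S2^12) = ((25704 : P2)*T2^12 + (4368 : P2)*S2*T2^11 + (48048 : P2)*S2^2*T2^10 + (-384384 : P2)*S2^3*T2^9 + (1564992 : P2)*S2^4*T2^8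 + (-4283136 : P2)*S2^5*T2^7 + (8456448 : P2)*S2^6*T2^6 + (-12300288 : P2)*S2^7*T2^5 + (13138944 : P2)*S2^8*T2^4 + (-10063872 : P2)*S2^9*T2^3 + (5246976 : P2)*S2^10*T2^2 + (-1671168 : P2)*S2^11*T2 + (245760 : P2)*S2^12) * S2 ^ 3 by ring, lam_s3]
  rw [show TT * ((3 : P2)*T2 + (-69 : P2)*S2) = ((3 : P2)*T2 + (-69 : P2)*S2) * TT by ring, lam_TT]
  rw [em]
  have hne : ¬ (E1 = E2) := by
    intro h
    have := DFunLike.congr_fun h (0 : Fin 2)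
    simp [E1, E2] at this
  simp [lam, MvPolynomial.coeff_monomial, hne]

/-- `α^14 β ≠ 0` in `R` -/
lemma key_ne : gA ^ 14 * gB ≠ 0 := by
  intro h
  have h1 : qm (vA ^ 14 * vB) = 0 := by
    rw [map_mul, map_pow]; exact h
  have h2 : vA ^ 14 * vB ∈ I41 := by
    have := (Ideal.Quotient.eq_zero_iff_mem).mp (show Ideal.Quotient.mk I41 (vA ^ 14 * vB) = 0 from h1)
    exact this
  have h3 : (MvPolynomial.aeval arc) (vA ^ 14 * vB) ∈ J2 := Ideal.mem_comap.mp (I41_le_comap h2)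
  have h4 := lam_J2 h3
  rw [target_id, lam_target] at h4
  norm_num at h4

/-! ### description of the degree-one graded piece -/

lemma wt_one {d : Fin 5 →₀ ℕ} (hd : (Finsupp.weight wt5) d = 1) :
    d = Finsupp.single 0 1 ∨ d = Finsupp.single 1 1 := by
  have he : d 0 + d 1 + d 2 * 2 + d 3 * 2 + d 4 * 2 = 1 := by
    rw [Finsupp.weight_apply, Finsupp.sum_fintype] at hd
    · simpa [Fin.sum_univ_five, wt5, smul_eq_mul] using hd
    · intro i; simp
  have h2 : d 2 = 0 := by omega
  have h3 : d 3 = 0 := by omega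
  have h4 : d 4 = 0 := by omega
  have h01 : (d 0 = 1 ∧ d 1 = 0) ∨ (d 0 = 0 ∧ d 1 = 1) := by omega
  rcases h01 with ⟨ha, hb⟩ | ⟨ha, hb⟩
  · left; ext i; fin_cases i <;> simp [Finsupp.single_apply, ha, hb, h2, h3, h4]
  · right; ext i; fin_cases i <;> simp [Finsupp.single_apply, ha, hb, h2, h3, h4]

lemma gr_one_mem {v : R41} (hv : v ∈ gr 1) : ∃ a b : ℚ, v = a • gA + b • gB := by
  rw [gr, Submodule.mem_map] at hv
  obtain ⟨p, hp, rfl⟩ := hv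
  rw [mem_weightedHomogeneousSubmodule] at hp
  refine ⟨MvPolynomial.coeff (Finsupp.single 0 1) p, MvPolynomial.coeff (Finsupp.single 1 1) p, ?_⟩
  have hps : p = MvPolynomial.coeff (Finsupp.single 0 1) p • vA
      + MvPolynomial.coeff (Finsupp.single 1 1) p • vB := by
    have hne : Finsupp.single (0 : Fin 5) 1 ≠ Finsupp.single 1 1 := by
      intro h
      have := DFunLike.congr_fun h (0 : Fin 5)
      simp [Finsupp.single_apply] at this
    ext d
    by_cases h0 : d = Finsupp.single 0 1
    · subst h0
      simp [vA, vB, MvPolynomial.coeff_smul, MvPolynomial.coeff_X', hne.symm]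
    · by_cases h1 : d = Finsupp.single 1 1
      · subst h1
        simp [vA, vB, MvPolynomial.coeff_smul, MvPolynomial.coeff_X', hne]
      · have hz : MvPolynomial.coeff d p = 0 := by
          by_contra hc
          rcases wt_one (hp hc) with h | h
          · exact h0 h
          · exact h1 h
        have h0' : ¬ (Finsupp.single (0 : Fin 5) 1 = d) := fun h => h0 h.symm
        have h1' : ¬ (Finsupp.single (1 : Fin 5) 1 = d) := fun h => h1 h.symm
        simp [vA, vB, MvPolynomial.coeff_smul, MvPolynomial.coeff_X', hz, h0', h1']
  calc qm.toLinearMap p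
      = qm.toLinearMap (MvPolynomial.coeff (Finsupp.single 0 1) p • vA
          + MvPolynomial.coeff (Finsupp.single 1 1) p • vB) := by rw [← hps]
    _ = _ := by
        rw [map_add, map_smul, map_smul]; rfl

lemma gA_mem_gr1 : gA ∈ gr 1 := by
  rw [gr, Submodule.mem_map]
  exact ⟨vA, by
    rw [mem_weightedHomogeneousSubmodule]
    have := MvPolynomial.isWeightedHomogeneous_X ℚ wt5 (0 : Fin 5)
    simpa [wt5, vA] using this, rfl⟩

/-! ### main argument -/

lemma perv_le (k : ℤ) (hk : k = 0 ∨ k = 1) : pervP k 1 ≤ Submodule.span ℚ {gA} := by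
  intro v hv
  rw [pervP, Submodule.mem_inf] at hv
  obtain ⟨hsup, hgr⟩ := hv
  obtain ⟨a, b, rfl⟩ := gr_one_mem hgr
  have hmul : gA ^ 14 * (a • gA + b • gB) = 0 := by
    refine Submodule.iSup_induction (motive := fun x => gA ^ 14 * x = 0) _ hsup
      (fun i r hr => ?_) (mul_zero _)
      (fun x y hx hy => by show gA ^ 14 * (x + y) = 0; rw [mul_add, hx, hy, add_zero])
    rw [Submodule.mem_inf] at hr
    obtain ⟨h1, h2⟩ := hr
    obtain ⟨w, hw⟩ := LinearMap.mem_range.mp h2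
    rcases i with _ | j
    · -- i = 0 : use the kernel condition
      have hker : gA ^ (13 + k.toNat) * r = 0 := by
        rcases hk with rfl | rfl
        · have : kerA (14 + 0 - 2 * ((1 : ℕ) : ℤ) + (((0 : ℕ) : ℤ) + 1)) = kerA 13 := by
            norm_num
          rw [this] at h1
          have h13 : kerA 13 = LinearMap.ker (mulA 13) := by
            rw [kerA]; norm_num; rfl
          rw [h13, LinearMap.mem_ker, mulA, LinearMap.mulLeft_apply] at h1
          simpa using h1
        · have : kerA (14 + 1 - 2 * ((1 : ℕ) : ℤ) + (((0 : ℕ) : ℤ) + 1)) = kerA 14 := by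
            norm_num
          rw [this] at h1
          have h14 : kerA 14 = LinearMap.ker (mulA 14) := by
            rw [kerA]; norm_num; rfl
          rw [h14, LinearMap.mem_ker, mulA, LinearMap.mulLeft_apply] at h1
          simpa using h1
      rcases hk with rfl | rfl
      · have : gA ^ 14 * r = gA * (gA ^ 13 * r) := by ring
        rw [this, show (13 : ℕ) = 13 + (0 : ℤ).toNat by norm_num, hker, mul_zero]
      · have : (13 + (1 : ℤ).toNat) = 14 := by norm_num
        rw [this] at hker
        exact hker
    · -- i = j + 1 : factor α^15
      rw [mulA, LinearMap.mulLeft_apply] at hw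
      rw [← hw]
      have : gA ^ 14 * (gA ^ (j + 1) * w) = gA ^ 15 * (gA ^ j * w) := by ring
      rw [this, hgA15, zero_mul]
  have h2 : a • (gA ^ 14 * gA) + b • (gA ^ 14 * gB) = 0 := by
    rw [mul_add, mul_smul_comm, mul_smul_comm] at hmul
    exact hmul
  have h3 : gA ^ 14 * gA = 0 := by
    rw [show gA ^ 14 * gA = gA ^ 15 by ring, hgA15]
  rw [h3, smul_zero, zero_add] at h2
  rcases smul_eq_zero.mp h2 with hb | hb
  · subst hb
    rw [zero_smul, add_zero]
    exact Submodule.smul_mem _ _ (Submodule.mem_span_singleton_self gA)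
  · exact absurd hb key_ne

lemma perv_ge (k : ℤ) (hk : k = 0 ∨ k = 1) : Submodule.span ℚ {gA} ≤ pervP k 1 := by
  rw [Submodule.span_le, Set.singleton_subset_iff, SetLike.mem_coe, pervP, Submodule.mem_inf]
  constructor
  · refine Submodule.mem_iSup_of_mem 1 ?_
    rw [Submodule.mem_inf]
    constructor
    · have hidx : (14 + k - 2 * ((1 : ℕ) : ℤ) + (((1 : ℕ) : ℤ) + 1)) = 14 + k := by ring
      rw [hidx]
      have hkpos : ¬ (14 + k ≤ 0) := by rcases hk with rfl | rfl <;> norm_num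
      rw [kerA, if_neg hkpos, LinearMap.mem_ker, mulA, LinearMap.mulLeft_apply]
      have htn : (14 + k).toNat = 14 + k.toNat := by rcases hk with rfl | rfl <;> decide
      rw [htn]
      have : gA ^ (14 + k.toNat) * gA = gA ^ k.toNat * gA ^ 15 := by ring
      rw [this, hgA15, mul_zero]
    · rw [LinearMap.mem_range]
      exact ⟨1, by rw [mulA, LinearMap.mulLeft_apply, pow_one, mul_one]⟩
  · exact gA_mem_gr1

lemma perv_eq (k : ℤ) (hk : k = 0 ∨ k = 1) : pervP k 1 = Submodule.span ℚ {gA} :=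
  le_antisymm (perv_le k hk) (perv_ge k hk)

end Aux

/-- `P₀ R¹ = P₁ R¹ = ℚ·α`: in particular no class in `H²(M_{4,1}, ℚ)` has
perversity exactly 1. -/
theorem perverse_filtration_degree_one :
    pervP 0 1 = Submodule.span ℚ {gA} ∧ pervP 1 1 = Submodule.span ℚ {gA} := by
  exact ⟨perv_eq 0 (Or.inl rfl), perv_eq 1 (Or.inr rfl)⟩
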